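/- arXiv:hep-th/9810027 — 4 statements merged into one kernel-verified Lean document; each statement's English description precedes it below -/
import Mathlib

section
/- The dressed scaling dimension Δ(Δ₀) = (√(1-D+24Δ₀) - √(1-D))/(√(25-D) - √(1-D)) (for fixed D < 1, Δ₀ ≥ 0) satisfies Δ(0) = 0 and Δ(1) = 1, is strictly increasing and strictly concave in Δ₀ on [0,∞), and satisfies Δ(Δ₀) → Δ₀ pointwise as D → -∞. -/
/-!
Put `t = 1 - D`, so that `Δ(Δ₀) = (√(t + 24Δ₀) - √t) / (√(t + 24) - √t)`. For fixed `t > 0` this is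
an increasing affine function of `√(t + 24Δ₀)`, and `√` is strictly increasing and strictly
concave. For the limit, rationalize: `√(t + a) - √t = a / (√(t + a) + √t)` and
`√(t + a) / √t → 1`, so the quotient tends to `24Δ₀ / 24` as `t → ∞`.
-/

open Real Filter Topology Set

theorem strictMonoOn_sqrt_add_mul {a c : ℝ} (ha : 0 ≤ a) (hc : 0 < c) :
    StrictMonoOn (fun x => √(a + c * x)) (Ici 0) := fun x hx _ _ hxy =>
  sqrt_lt_sqrt (add_nonneg ha (mul_nonneg hc.le hx)) (by gcongr)

theorem strictConcaveOn_sqrt_add_mul {a c : ℝ} (ha : 0 ≤ a) (hc : 0 < c) :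
    StrictConcaveOn ℝ (Ici 0) fun x => √(a + c * x) := by
  refine ⟨convex_Ici 0, fun x hx y hy hxy α β hα hβ hαβ => ?_⟩
  have hx' : a + c * x ∈ Ici 0 := by simp only [mem_Ici] at hx ⊢; positivity
  have hy' : a + c * y ∈ Ici 0 := by simp only [mem_Ici] at hy ⊢; positivity
  have hne : a + c * x ≠ a + c * y := by simpa [hc.ne'] using hxy
  convert strictConcaveOn_sqrt.2 hx' hy' hne hα hβ hαβ using 2
  simp only [smul_eq_mul]
  linear_combination a * hαβ.symm

theorem StrictConcaveOn.sub_const_div {E : Type*} [AddCommGroup E] [Module ℝ E] {s : Set E}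
    {f : E → ℝ} (hf : StrictConcaveOn ℝ s f) (b : ℝ) {d : ℝ} (hd : 0 < d) :
    StrictConcaveOn ℝ s fun x => (f x - b) / d := by
  refine ⟨hf.1, fun x hx y hy hxy α β hα hβ hαβ => ?_⟩
  have key := hf.2 hx hy hxy hα hβ hαβ
  simp only [smul_eq_mul] at key ⊢
  have hcomb : α * ((f x - b) / d) + β * ((f y - b) / d) = (α * f x + β * f y - b) / d := by
    field_simp
    linear_combination (-b) * hαβ
  rw [hcomb]
  gcongr

theorem sqrt_add_sub_sqrt {t : ℝ} (ht : 0 < t) {a : ℝ} (hta : 0 ≤ t + a) :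
    √(t + a) - √t = a / (√(t + a) + √t) := by
  have hpos : 0 < √(t + a) + √t := by positivity
  rw [eq_div_iff hpos.ne']
  nlinarith [sq_sqrt hta, sq_sqrt ht.le]

theorem tendsto_sqrt_add_div_sqrt_atTop (a : ℝ) :
    Tendsto (fun t => √(t + a) / √t) atTop (𝓝 1) := by
  have hquot : Tendsto (fun t : ℝ => 1 + a / t) atTop (𝓝 1) := by
    simpa using tendsto_const_nhds.add (tendsto_id.const_div_atTop a)
  have hsqrt := (continuous_sqrt.tendsto 1).comp hquot
  rw [sqrt_one] at hsqrt
  refine hsqrt.congr' ?_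
  filter_upwards [eventually_gt_atTop 0] with t ht
  rw [Function.comp_apply, ← sqrt_div' _ ht.le, add_div, div_self ht.ne']

theorem tendsto_sqrt_add_sub_sqrt_div_atTop (a : ℝ) {b : ℝ} (hb : b ≠ 0) :
    Tendsto (fun t => (√(t + a) - √t) / (√(t + b) - √t)) atTop (𝓝 (a / b)) := by
  have hnum := (tendsto_sqrt_add_div_sqrt_atTop b).add_const 1
  have hden := (tendsto_sqrt_add_div_sqrt_atTop a).add_const 1
  have hlim := (hnum.div hden (by norm_num)).const_mul (a / b)
  norm_num at hlim
  refine hlim.congr' ?_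
  filter_upwards [eventually_gt_atTop 0, eventually_ge_atTop (-a), eventually_ge_atTop (-b)]
    with t ht hat hbt
  have hta : 0 ≤ t + a := by linarith
  have htb : 0 ≤ t + b := by linarith
  rw [sqrt_add_sub_sqrt ht hta, sqrt_add_sub_sqrt ht htb]
  have : 0 < √t := sqrt_pos.2 ht
  field_simp

noncomputable def dressedDim (D Δ₀ : ℝ) : ℝ :=
  (√(1 - D + 24 * Δ₀) - √(1 - D)) / (√(25 - D) - √(1 - D))

theorem dressedDim_zero (D : ℝ) : dressedDim D 0 = 0 := by
  simp [dressedDim]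

section

variable {D : ℝ}

theorem dressedDim_denom_pos (hD : D < 1) : 0 < √(25 - D) - √(1 - D) :=
  sub_pos.2 (sqrt_lt_sqrt (by linarith) (by linarith))

theorem dressedDim_one (hD : D < 1) : dressedDim D 1 = 1 := by
  rw [dressedDim, show 1 - D + 24 * 1 = 25 - D by ring, div_self (dressedDim_denom_pos hD).ne']

theorem strictMonoOn_dressedDim (hD : D < 1) : StrictMonoOn (dressedDim D) (Ici 0) :=
  fun _ hx _ hy hxy => div_lt_div_of_pos_right
    (sub_lt_sub_right (strictMonoOn_sqrt_add_mul (by linarith) (by norm_num) hx hy hxy) _)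
    (dressedDim_denom_pos hD)

theorem strictConcaveOn_dressedDim (hD : D < 1) : StrictConcaveOn ℝ (Ici 0) (dressedDim D) :=
  (strictConcaveOn_sqrt_add_mul (by linarith) (by norm_num)).sub_const_div _
    (dressedDim_denom_pos hD)

end

theorem tendsto_dressedDim_atBot (Δ₀ : ℝ) : Tendsto (dressedDim · Δ₀) atBot (𝓝 Δ₀) := by
  have h1D : Tendsto (fun D : ℝ => 1 - D) atBot atTop :=
    tendsto_atTop_add_const_left _ 1 tendsto_neg_atBot_atTop
  have := (tendsto_sqrt_add_sub_sqrt_div_atTop (24 * Δ₀) (b := 24) (by norm_num)).comp h1D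
  rw [mul_div_cancel_left₀ _ (by norm_num)] at this
  refine this.congr fun D => ?_
  simp only [Function.comp_apply, dressedDim]
  rw [show (1:ℝ) - D + 24 = 25 - D by ring]

/-- Properties of the KPZ dressed scaling dimension
`Δ(D,Δ₀) = (√(1-D+24Δ₀) - √(1-D))/(√(25-D) - √(1-D))` for `D < 1`:
`Δ(0) = 0`, `Δ(1) = 1`, strict monotonicity and strict concavity in `Δ₀` on `[0,∞)`,
and the classical limit `Δ(D,Δ₀) → Δ₀` as `D → -∞`. -/
theorem stmt7 (Δ : ℝ → ℝ → ℝ)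
    (hΔ : ∀ D Δ₀ : ℝ, Δ D Δ₀ =
      (Real.sqrt (1-D+24*Δ₀) - Real.sqrt (1-D)) /
      (Real.sqrt (25-D) - Real.sqrt (1-D))) :
    (∀ D < (1:ℝ), Δ D 0 = 0 ∧ Δ D 1 = 1 ∧
      StrictMonoOn (Δ D) (Set.Ici 0) ∧ StrictConcaveOn ℝ (Set.Ici 0) (Δ D)) ∧
    (∀ Δ₀ ≥ (0:ℝ), Tendsto (fun D => Δ D Δ₀) atBot (𝓝 Δ₀)) := by
  obtain rfl : Δ = dressedDim := funext₂ hΔ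
  exact ⟨fun D hD => ⟨dressedDim_zero D, dressedDim_one hD, strictMonoOn_dressedDim hD,
    strictConcaveOn_dressedDim hD⟩, fun Δ₀ _ => tendsto_dressedDim_atBot Δ₀⟩
end

section
/- Branched polymer criticality: let f : ℕ → ℝ≥0 with f(n) > 0 for all n ≥ 2 (and suitable growth so that F(G) := (1 + Σ_{n≥2} f(n)G^{n-1})/G has positive finite radius of convergence), and suppose the self-consistency equation e^μ = F(G) defines G(μ) for μ > μ_c as the smaller positive root. If G_c > 0 is a point where F'(G_c) = 0 and F''(G_c) > 0, then setting μ_c = log F(G_c), one has G(μ) = G_c - C·(μ-μ_c)^{1/2}·(1 + o(1)) as μ → μ_c⁺ with C = √(2F(G_c)/F''(G_c)); in particular the one-point function exponent is γ = 1/2. -/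
open Real Filter Topology

/-!
Near a nondegenerate critical point, `F x - F G_c ~ F''(G_c)/2 · (x - G_c)²` (L'Hôpital once,
then the definition of `F''`), while `e^μ - e^{μ_c} ~ F(G_c) · (μ - μ_c)`. Since
`e^μ = F(G(μ))` the two left-hand sides agree, so `(G_c - G(μ))² / (μ - μ_c) → 2F(G_c)/F''(G_c)`,
and taking square roots (with `G(μ) < G_c` fixing the sign) gives the claim.
-/

theorem tendsto_sub_div_sq_of_deriv_eq_zero {f : ℝ → ℝ} {x₀ : ℝ}
    (hf : ContDiffAt ℝ 2 f x₀) (hf' : deriv f x₀ = 0) :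
    Tendsto (fun x => (f x - f x₀) / (x - x₀) ^ 2) (𝓝[≠] x₀)
      (𝓝 (iteratedDeriv 2 f x₀ / 2)) := by
  have hdiff : ∀ᶠ x in 𝓝[≠] x₀, HasDerivAt f (deriv f x) x :=
    eventually_nhdsWithin_of_eventually_nhds <| (hf.eventually (by simp)).mono
      fun x hx => (hx.differentiableAt (by norm_num)).hasDerivAt
  have hf'' : HasDerivAt (deriv f) (iteratedDeriv 2 f x₀) x₀ := by
    rw [iteratedDeriv_succ, iteratedDeriv_one]
    exact ((hf.derivWithin (m := 1) (by norm_num)).differentiableAt (by norm_num)).hasDerivAt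
  refine HasDerivAt.lhopital_zero_nhdsNE (f' := deriv f) (g' := fun x => 2 * (x - x₀))
    (hdiff.mono fun x hx => hx.sub_const _)
    (Eventually.of_forall fun x => by simpa using ((hasDerivAt_id x).sub_const x₀).fun_pow 2)
    (eventually_mem_nhdsWithin.mono fun x hx => by simpa [sub_eq_zero] using hx)
    ?_ ?_ ?_
  · simpa using (hf.continuousAt.sub_const (f x₀)).mono_left nhdsWithin_le_nhds
  · exact (Continuous.tendsto' (by fun_prop) x₀ 0 (by simp)).mono_left nhdsWithin_le_nhds
  · refine ((hasDerivAt_iff_tendsto_slope.mp hf'').div_const 2).congr fun x => ?_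
    rw [slope_def_field, hf', sub_zero, div_div, mul_comm]

theorem tendsto_div_sqrt_of_tendsto_sq_div {α : Type*} {l : Filter α} {u v : α → ℝ} {c : ℝ}
    (hu : ∀ᶠ a in l, 0 ≤ u a) (h : Tendsto (fun a => u a ^ 2 / v a) l (𝓝 c)) :
    Tendsto (fun a => u a / √(v a)) l (𝓝 √c) :=
  ((continuous_sqrt.tendsto c).comp h).congr' <| hu.mono fun a ha => by
    simp only [Function.comp_apply]
    rw [sqrt_div (sq_nonneg _), sqrt_sq ha]

theorem stmt12_general (F G : ℝ → ℝ) (Gc μc : ℝ)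
    (hFGc : 0 < F Gc)
    (hF : ContDiffAt ℝ 2 F Gc)
    (hF1 : deriv F Gc = 0)
    (hF2 : 0 < iteratedDeriv 2 F Gc)
    (hμc : μc = Real.log (F Gc))
    (hG : ∀ᶠ μ in 𝓝[>] μc, Real.exp μ = F (G μ) ∧ 0 < G μ ∧ G μ < Gc)
    (hGlim : Tendsto G (𝓝[>] μc) (𝓝 Gc)) :
    Tendsto (fun μ => (Gc - G μ) / Real.sqrt (μ - μc)) (𝓝[>] μc)
      (𝓝 (Real.sqrt (2 * F Gc / iteratedDeriv 2 F Gc))) := by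
  have hexp_μc : exp μc = F Gc := by rw [hμc, exp_log hFGc]
  have hG_ne : Tendsto G (𝓝[>] μc) (𝓝[≠] Gc) :=
    tendsto_nhdsWithin_of_tendsto_nhds_of_eventually_within G hGlim (hG.mono fun _ h => h.2.2.ne)
  have hF_quadratic := (tendsto_sub_div_sq_of_deriv_eq_zero hF hF1).comp hG_ne
  have hexp_slope : Tendsto (fun μ => (exp μ - F Gc) / (μ - μc)) (𝓝[>] μc) (𝓝 (F Gc)) := by
    rw [← hexp_μc]
    refine ((hasDerivAt_iff_tendsto_slope.mp (hasDerivAt_exp μc)).mono_left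
      (nhdsGT_le_nhdsNE μc)).congr fun μ => ?_
    rw [slope_def_field]
  have hratio := hexp_slope.div hF_quadratic (by positivity)
  rw [show F Gc / (iteratedDeriv 2 F Gc / 2) = 2 * F Gc / iteratedDeriv 2 F Gc by field_simp]
    at hratio
  refine tendsto_div_sqrt_of_tendsto_sq_div (hG.mono fun _ h => (sub_pos.2 h.2.2).le)
    (hratio.congr' ?_)
  filter_upwards [hG, self_mem_nhdsWithin] with μ ⟨hμ, _, hGμ⟩ (hμc_lt : μc < μ)
  have hexp_ne : exp μ - F Gc ≠ 0 := by
    rw [← hexp_μc, sub_ne_zero]; exact (exp_lt_exp.2 hμc_lt).ne'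
  simp only [Pi.div_apply, Function.comp_apply, ← hμ]
  field_simp
  ring

/-- Branched polymer criticality: if `F` is `C²` near a nondegenerate interior
minimum `G_c > 0` with `F(G_c) > 0`, `F'(G_c) = 0`, `F''(G_c) > 0`, and `G(μ)`
solves `e^μ = F(G(μ))` with `G(μ) < G_c` and `G(μ) → G_c` as `μ → μ_c⁺` where
`μ_c = log F(G_c)`, then `G_c - G(μ) ~ √(2F(G_c)/F''(G_c)) · (μ-μ_c)^(1/2)`,
so the susceptibility exponent is `γ = 1/2`. -/
theorem stmt12 (F G : ℝ → ℝ) (Gc μc : ℝ)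
    (hGc : 0 < Gc) (hFGc : 0 < F Gc)
    (hF : ContDiffAt ℝ 2 F Gc)
    (hF1 : deriv F Gc = 0)
    (hF2 : 0 < iteratedDeriv 2 F Gc)
    (hμc : μc = Real.log (F Gc))
    (hG : ∀ᶠ μ in 𝓝[>] μc, Real.exp μ = F (G μ) ∧ 0 < G μ ∧ G μ < Gc)
    (hGlim : Tendsto G (𝓝[>] μc) (𝓝 Gc)) :
    Tendsto (fun μ => (Gc - G μ) / Real.sqrt (μ - μc)) (𝓝[>] μc)
      (𝓝 (Real.sqrt (2 * F Gc / iteratedDeriv 2 F Gc))) :=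
  stmt12_general F G Gc μc hFGc hF hF1 hF2 hμc hG hGlim
end

section
/- m-th multicritical branched polymers: if F is C^{m+1} near G_c with F^{(k)}(G_c)=0 for k=1,...,m-1, F^{(m)}(G_c) > 0, F(G_c) > 0, and G(μ) denotes the solution of e^μ = F(G) with G(μ) < G_c tending to G_c as μ → μ_c⁺ := log F(G_c)⁺, then G_c - G(μ) ~ C·(μ-μ_c)^{1/m} as μ → μ_c⁺, with C = (m!·F(G_c)/F^{(m)}(G_c))^{1/m}; hence γ = (m-1)/m. -/
/-!
Taylor's formula gives `F(G) - F(G_c) ~ F^(m)(G_c)/m! · (G - G_c)^m`, while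
`F(G(μ)) - F(G_c) = e^μ - e^{μ_c} ~ F(G_c) (μ - μ_c)`. Dividing the two,
`(G_c - G(μ))^m / (μ - μ_c) → m! F(G_c) / F^(m)(G_c)` (this forces `m` to be even, since
`G(μ) < G_c`), and taking `m`-th roots gives the claim.
-/

open Real Filter Topology

open scoped Nat

theorem tendsto_sub_div_pow_of_iteratedDeriv_eq_zero {n : ℕ} (hn : 1 ≤ n) {f : ℝ → ℝ} {a : ℝ}
    (hf : ContDiffAt ℝ n f a) (hfk : ∀ k, 1 ≤ k → k < n → iteratedDeriv k f a = 0) :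
    Tendsto (fun x => (f x - f a) / (x - a) ^ n) (𝓝[≠] a)
      (𝓝 (iteratedDeriv n f a / n !)) := by
  induction n, hn using Nat.le_induction generalizing f with
  | base =>
    have hd := (hasDerivAt_iff_tendsto_slope).1
      (hf.differentiableAt (by norm_num)).hasDerivAt
    simpa [slope_fun_def_field] using hd
  | succ n hn ih =>
    have hf' : ContDiffAt ℝ (n + 1) f a := by exact_mod_cast hf
    have hderiv_zero : deriv f a = 0 := by
      simpa using hfk 1 le_rfl (by omega)
    -- The induction hypothesis for `deriv f`; L'Hôpital's rule transfers it to `f`.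
    have hderiv := ih (hf'.derivWithin le_rfl) fun k hk1 hk2 => by
      rw [← iteratedDeriv_succ']
      exact hfk (k + 1) (by omega) (by omega)
    rw [← iteratedDeriv_succ', hderiv_zero] at hderiv
    have hdiff : ∀ᶠ x in 𝓝 a, DifferentiableAt ℝ f x := by
      filter_upwards [hf'.eventually (by simp)] with x hx
      exact hx.differentiableAt (by simp)
    refine HasDerivAt.lhopital_zero_nhdsNE (f' := deriv f)
      (g' := fun x => (n + 1 : ℝ) * (x - a) ^ n) ?_ ?_ ?_ ?_ ?_ ?_
    · filter_upwards [nhdsWithin_le_nhds hdiff] with x hx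
      exact hx.hasDerivAt.sub_const (f a)
    · refine Eventually.of_forall fun x => ?_
      simpa using ((hasDerivAt_id x).sub_const a).fun_pow (n + 1)
    · filter_upwards [self_mem_nhdsWithin] with x hx
      have : x - a ≠ 0 := sub_ne_zero.2 hx
      positivity
    · have := (hf.continuousAt.tendsto).sub_const (f a)
      rw [sub_self] at this
      exact this.mono_left nhdsWithin_le_nhds
    · have : Tendsto (fun x : ℝ => (x - a) ^ (n + 1)) (𝓝 a) (𝓝 ((a - a) ^ (n + 1))) :=
        ((continuous_id.sub continuous_const).pow (n + 1)).tendsto a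
      rw [sub_self, zero_pow (by omega)] at this
      exact this.mono_left nhdsWithin_le_nhds
    · convert hderiv.div_const (n + 1 : ℝ) using 2 with x
      · rw [sub_zero, div_div, mul_comm]
      · rw [Nat.factorial_succ, Nat.cast_mul, div_div, mul_comm]
        push_cast
        ring

theorem Filter.Tendsto.div_div_div_cancel_left {α : Type*} {l : Filter α} {a b c : α → ℝ} {p q : ℝ}
    (hab : Tendsto (fun x => a x / b x) l (𝓝 p)) (hac : Tendsto (fun x => a x / c x) l (𝓝 q))
    (hq : q ≠ 0) : Tendsto (fun x => c x / b x) l (𝓝 (p / q)) := by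
  refine (hab.div hac hq).congr' ?_
  filter_upwards [hac.eventually_ne hq] with x hx
  exact div_div_div_cancel_left' _ _ (left_ne_zero_of_mul (by simpa [div_eq_mul_inv] using hx))

theorem even_of_tendsto_pow_div {α : Type*} {l : Filter α} [l.NeBot] {w v : α → ℝ} {m : ℕ}
    {L : ℝ} (hw : ∀ᶠ x in l, w x < 0) (hv : ∀ᶠ x in l, 0 < v x)
    (h : Tendsto (fun x => w x ^ m / v x) l (𝓝 L)) (hL : 0 < L) : Even m := by
  by_contra hodd
  rw [Nat.not_even_iff_odd] at hodd
  obtain ⟨x, hpos, hwx, hvx⟩ := ((h.eventually (eventually_gt_nhds hL)).and (hw.and hv)).exists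
  exact (div_neg_of_neg_of_pos (hodd.pow_neg hwx) hvx).not_gt hpos

theorem tendsto_div_rpow_of_tendsto_pow_div {α : Type*} {l : Filter α} {u v : α → ℝ} {m : ℕ}
    {L : ℝ} (hm : m ≠ 0) (hu : ∀ᶠ x in l, 0 ≤ u x) (hv : ∀ᶠ x in l, 0 ≤ v x)
    (h : Tendsto (fun x => u x ^ m / v x) l (𝓝 L)) :
    Tendsto (fun x => u x / v x ^ ((1 : ℝ) / m)) l (𝓝 (L ^ ((1 : ℝ) / m))) := by
  have hroot : ContinuousAt (fun y : ℝ => y ^ ((1 : ℝ) / m)) L :=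
    continuousAt_rpow_const _ _ (Or.inr (by positivity))
  refine (hroot.tendsto.comp h).congr' ?_
  filter_upwards [hu, hv] with x hux hvx
  simp only [Function.comp_apply]
  rw [div_rpow (pow_nonneg hux m) hvx, ← rpow_natCast, ← rpow_mul hux,
    mul_one_div_cancel (Nat.cast_ne_zero.2 hm), rpow_one]

theorem tendsto_exp_slope_nhdsGT (a : ℝ) :
    Tendsto (fun μ => (exp μ - exp a) / (μ - a)) (𝓝[>] a) (𝓝 (exp a)) := by
  have h := (hasDerivWithinAt_iff_tendsto_slope' (s := Set.Ioi a) (lt_irrefl a)).1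
    (hasDerivAt_exp a).hasDerivWithinAt
  simpa only [slope_fun_def_field] using h

theorem stmt13_general (m : ℕ) (hm : 2 ≤ m) (F G : ℝ → ℝ) (Gc μc : ℝ)
    (hFGc : 0 < F Gc)
    (hF : ContDiffAt ℝ (m+1) F Gc)
    (hFk : ∀ k, 1 ≤ k → k ≤ m - 1 → iteratedDeriv k F Gc = 0)
    (hFm : 0 < iteratedDeriv m F Gc)
    (hμc : μc = Real.log (F Gc))
    (hG : ∀ᶠ μ in 𝓝[>] μc, Real.exp μ = F (G μ) ∧ G μ < Gc)
    (hGlim : Tendsto G (𝓝[>] μc) (𝓝 Gc)) :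
    Tendsto (fun μ => (Gc - G μ) / (μ - μc) ^ ((1:ℝ)/m)) (𝓝[>] μc)
      (𝓝 ((m.factorial * F Gc / iteratedDeriv m F Gc) ^ ((1:ℝ)/m))) := by
  have hexp : exp μc = F Gc := by rw [hμc, exp_log hFGc]
  have hc : 0 < iteratedDeriv m F Gc / m ! := div_pos hFm (by positivity)
  have hG_ne : Tendsto G (𝓝[>] μc) (𝓝[≠] Gc) :=
    tendsto_nhdsWithin_iff.2 ⟨hGlim, hG.mono fun μ hμ => hμ.2.ne⟩
  have htaylor := (tendsto_sub_div_pow_of_iteratedDeriv_eq_zero (n := m) (by omega)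
    (hF.of_le (by exact_mod_cast m.le_succ)) fun k hk1 hk2 => hFk k hk1 (by omega)).comp hG_ne
  have hslope : Tendsto (fun μ => (F (G μ) - F Gc) / (μ - μc)) (𝓝[>] μc) (𝓝 (F Gc)) := by
    refine hexp ▸ (tendsto_exp_slope_nhdsGT μc).congr' ?_
    filter_upwards [hG] with μ hμ
    rw [hμ.1, hexp]
  have hratio := hslope.div_div_div_cancel_left htaylor hc.ne'
  have hL : F Gc / (iteratedDeriv m F Gc / m !) = m ! * F Gc / iteratedDeriv m F Gc := by
    field_simp
  rw [hL] at hratio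
  have hμ_pos : ∀ᶠ μ in 𝓝[>] μc, 0 < μ - μc :=
    eventually_nhdsWithin_of_forall fun μ hμ => sub_pos.2 hμ
  have hG_lt : ∀ᶠ μ in 𝓝[>] μc, G μ - Gc < 0 := hG.mono fun μ hμ => sub_neg.2 hμ.2
  have heven := even_of_tendsto_pow_div hG_lt hμ_pos hratio (by positivity)
  refine tendsto_div_rpow_of_tendsto_pow_div (by positivity) (hG_lt.mono fun μ hμ => by linarith)
    (hμ_pos.mono fun μ hμ => hμ.le) (hratio.congr fun μ => ?_)
  rw [← heven.neg_pow, neg_sub]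

/-- `m`-th multicritical branched polymers: if `F` is `C^(m+1)` near `G_c` with
`F^(k)(G_c) = 0` for `k = 1,…,m-1`, `F^(m)(G_c) > 0`, `F(G_c) > 0`, and `G(μ)`
solves `e^μ = F(G(μ))` with `G(μ) < G_c` and `G(μ) → G_c` as `μ → μ_c⁺` where
`μ_c = log F(G_c)`, then
`G_c - G(μ) ~ (m!·F(G_c)/F^(m)(G_c))^(1/m) · (μ-μ_c)^(1/m)`,
so `γ = (m-1)/m`. -/
theorem stmt13 (m : ℕ) (hm : 2 ≤ m) (F G : ℝ → ℝ) (Gc μc : ℝ)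
    (hGc : 0 < Gc) (hFGc : 0 < F Gc)
    (hF : ContDiffAt ℝ (m+1) F Gc)
    (hFk : ∀ k, 1 ≤ k → k ≤ m - 1 → iteratedDeriv k F Gc = 0)
    (hFm : 0 < iteratedDeriv m F Gc)
    (hμc : μc = Real.log (F Gc))
    (hG : ∀ᶠ μ in 𝓝[>] μc, Real.exp μ = F (G μ) ∧ G μ < Gc)
    (hGlim : Tendsto G (𝓝[>] μc) (𝓝 Gc)) :
    Tendsto (fun μ => (Gc - G μ) / (μ - μc) ^ ((1:ℝ)/m)) (𝓝[>] μc)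
      (𝓝 ((m.factorial * F Gc / iteratedDeriv m F Gc) ^ ((1:ℝ)/m))) :=
  stmt13_general m hm F G Gc μc hFGc hF hFk hFm hμc hG hGlim
end

section
/- Appearance of spikes (single-vertex integral): for α < 3 - 1/N with N ≥ 1 and Λ > 0, the iterated integral ∫_Λ^∞ dl₁ l₁^{-Nα} ∫₀^{Λ/l₁}⋯∫₀^{Λ/l₁} (l_{N+1}⋯l_{2N})^{(2N-1)/N - α} dl_{N+1}⋯dl_{2N} is finite and equals a constant times ∫_Λ^∞ l₁^{1-3N} dl₁, which is finite; but the same integral with an extra factor l₁^n in the integrand diverges for every n ≥ 3N - 2. -/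
open Real MeasureTheory

/-! The inner integral factorises into `N` copies of `∫₀^{Λ/l₁} x^p dx = (Λ/l₁)^q / q` with
`q = p + 1 = 3 - 1/N - α > 0`. Against the outer factor `l₁^{-Nα}` the dependence on `α` cancels,
`-Nα - Nq = 1 - 3N`, so the spike integrand is `C · l₁^{1-3N}` with `C > 0`. Since `l₁^s` is
integrable on `(Λ, ∞)` exactly when `s < -1`, the moment `l₁^n` is finite iff `n < 3N - 2`. -/

theorem setIntegral_univ_pi_prod_eq_pow {ι 𝕜 E : Type*} [Fintype ι] [RCLike 𝕜] [MeasureSpace E]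
    [SigmaFinite (volume : Measure E)] (f : E → 𝕜) (s : Set E) :
    ∫ y in Set.univ.pi (fun _ : ι => s), ∏ i, f (y i) = (∫ x in s, f x) ^ Fintype.card ι := by
  rw [volume_pi, Measure.restrict_pi_pi, integral_fintype_prod_eq_pow]

theorem integral_Ioo_zero_rpow {p c : ℝ} (hp : -1 < p) (hc : 0 ≤ c) :
    ∫ x in Set.Ioo 0 c, x ^ p = c ^ (p + 1) / (p + 1) := by
  rw [← integral_Ioc_eq_integral_Ioo, ← intervalIntegral.integral_of_le hc,
    integral_rpow (Or.inl hp), zero_rpow (by linarith), sub_zero]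

theorem rpow_mul_div_rpow_pow {a q Λ l : ℝ} (hΛ : 0 ≤ Λ) (hl : 0 < l) (N : ℕ) :
    l ^ a * ((Λ / l) ^ q / q) ^ N = (Λ ^ q / q) ^ N * l ^ (a - N * q) := by
  have hbase : (Λ / l) ^ q / q = Λ ^ q / q * l ^ (-q) := by
    rw [div_rpow hΛ hl.le, rpow_neg hl.le]
    ring
  have hpow : (l ^ (-q)) ^ N = l ^ (-(N * q)) := by
    rw [← rpow_natCast, ← rpow_mul hl.le, neg_mul, mul_comm]
  rw [hbase, mul_pow, hpow, sub_eq_add_neg, rpow_add hl]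
  ring

theorem integrableOn_Ioi_const_mul_rpow_iff {C s t : ℝ} (hC : C ≠ 0) (ht : 0 < t) :
    IntegrableOn (fun x => C * x ^ s) (Set.Ioi t) ↔ s < -1 :=
  (integrable_const_mul_iff hC.isUnit _).trans (integrableOn_Ioi_rpow_iff ht)

/-- Appearance of spikes in 2d quantum Regge calculus: for a vertex of order `N`
and `α < 3 - 1/N`, the inner `N`-fold integral over the short links in
`(0, Λ/l₁)` of `(l_{N+1}⋯l_{2N})^((2N-1)/N - α)` equals
`((Λ/l₁)^(3-1/N-α)/(3-1/N-α))^N`; the full spike integral (with outer factor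
`l₁^(-Nα)`) is finite on `(Λ,∞)`, but inserting `l₁^n` makes it divergent for
every `n ≥ 3N-2`, i.e. `⟨l₁^n⟩ = ∞`. -/
theorem stmt15 (N : ℕ) (hN : 1 ≤ N) (Λ α : ℝ) (hΛ : 0 < Λ)
    (hα : α < 3 - 1/N) :
    (∀ l₁ : ℝ, 0 < l₁ →
      (∫ y in Set.univ.pi (fun _ : Fin N => Set.Ioo (0:ℝ) (Λ/l₁)),
          ∏ i, (y i) ^ ((2*(N:ℝ)-1)/N - α))
        = ((Λ/l₁) ^ (3 - 1/(N:ℝ) - α) / (3 - 1/(N:ℝ) - α)) ^ (N:ℕ)) ∧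
    IntegrableOn
      (fun l₁ : ℝ => l₁ ^ (-(N:ℝ)*α) *
        ∫ y in Set.univ.pi (fun _ : Fin N => Set.Ioo (0:ℝ) (Λ/l₁)),
          ∏ i, (y i) ^ ((2*(N:ℝ)-1)/N - α))
      (Set.Ioi Λ) ∧
    (∀ n : ℕ, 3*(N:ℝ) - 2 ≤ n →
      ¬ IntegrableOn
        (fun l₁ : ℝ => l₁ ^ (n:ℝ) * (l₁ ^ (-(N:ℝ)*α) *
          ∫ y in Set.univ.pi (fun _ : Fin N => Set.Ioo (0:ℝ) (Λ/l₁)),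
            ∏ i, (y i) ^ ((2*(N:ℝ)-1)/N - α)))
        (Set.Ioi Λ)) := by
  have hN1 : (1:ℝ) ≤ N := by exact_mod_cast hN
  set q : ℝ := 3 - 1/(N:ℝ) - α
  have hq : (2*(N:ℝ)-1)/N - α + 1 = q := by
    simp only [q]
    field_simp
    ring
  have inner : ∀ l₁ : ℝ, 0 < l₁ →
      (∫ y in Set.univ.pi (fun _ : Fin N => Set.Ioo (0:ℝ) (Λ/l₁)),
          ∏ i, (y i) ^ ((2*(N:ℝ)-1)/N - α)) = ((Λ/l₁) ^ q / q) ^ N := fun l₁ hl₁ => by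
    rw [setIntegral_univ_pi_prod_eq_pow (fun x : ℝ => x ^ ((2*(N:ℝ)-1)/N - α)),
      integral_Ioo_zero_rpow (by linarith) (div_pos hΛ hl₁).le, hq, Fintype.card_fin]
  set C : ℝ := (Λ ^ q / q) ^ N
  have hC : C ≠ 0 := by positivity
  have spike : ∀ l₁ ∈ Set.Ioi Λ, l₁ ^ (-(N:ℝ)*α) * ((Λ/l₁) ^ q / q) ^ N
      = C * l₁ ^ (1 - 3*(N:ℝ)) := fun l₁ hl₁ => by
    rw [rpow_mul_div_rpow_pow hΛ.le (hΛ.trans hl₁)]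
    congr 2
    simp only [q]
    field_simp
    ring
  refine ⟨inner, ?_, fun n hn hint => ?_⟩
  · refine ((integrableOn_Ioi_const_mul_rpow_iff (s := 1 - 3*(N:ℝ)) hC hΛ).2
      (by linarith)).congr_fun (fun l₁ hl₁ => ?_) measurableSet_Ioi
    rw [inner l₁ (hΛ.trans hl₁), spike l₁ hl₁]
  · have hmoment := (integrableOn_Ioi_const_mul_rpow_iff (s := n + (1 - 3*(N:ℝ))) hC hΛ).1
      (hint.congr_fun (fun l₁ hl₁ => ?_) measurableSet_Ioi)
    · linarith
    · dsimp only
      rw [inner l₁ (hΛ.trans hl₁), spike l₁ hl₁, rpow_add (hΛ.trans hl₁)]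
      ring
end
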